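/- The homogenized elasticity tensor Ĉ_{ijkl} obtained from a uniformly elliptic periodic tensor C_{ijkl} via the cell functions N^{kl} is itself uniformly elliptic on symmetric matrices: there exists λ' > 0 such that Ĉ_{ijkl} ξ_{ij} ξ_{kl} ≥ λ' |ξ|^2 for all symmetric 3×3 matrices ξ. -/

import Mathlib

open MeasureTheory

noncomputable section

/-- Partial derivative of a scalar field on `Fin 3 → ℝ` in direction `i`. -/
def pd (f : (Fin 3 → ℝ) → ℝ) (i : Fin 3) (x : Fin 3 → ℝ) : ℝ :=
  fderiv ℝ f x (Pi.single i 1)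

/-- The unit cell `Q = (0,1)³`. -/
def Qcell : Set (Fin 3 → ℝ) := {β | ∀ i, β i ∈ Set.Ioo (0:ℝ) 1}

/-- 1-periodicity in each coordinate direction. -/
def Per (f : (Fin 3 → ℝ) → ℝ) : Prop :=
  ∀ x : Fin 3 → ℝ, ∀ i : Fin 3, f (x + Pi.single i 1) = f x

/-- The class of admissible (periodic, `C¹`, zero-mean over the cell) vector fields. -/
def Admissible (N : (Fin 3 → ℝ) → Fin 3 → ℝ) : Prop :=
  (∀ i, ContDiff ℝ 1 (fun β => N β i)) ∧ (∀ i, Per (fun β => N β i)) ∧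
    (∀ i, ∫ β in Qcell, N β i = 0)

/-! ### Auxiliary material -/

section Aux
open Set

lemma Qcell_eq : Qcell = Set.pi Set.univ (fun _ => Set.Ioo (0:ℝ) 1) := by
  ext x; simp [Qcell]

lemma measurableSet_Qcell : MeasurableSet Qcell := by
  rw [Qcell_eq]; exact MeasurableSet.univ_pi fun i => measurableSet_Ioo

lemma volume_Qcell : volume Qcell = 1 := by
  rw [Qcell_eq, volume_pi_pi]; simp

lemma Qcell_subset_Icc : Qcell ⊆ Set.Icc (0 : Fin 3 → ℝ) 1 := by
  intro x hx
  constructor <;> intro i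
  · exact (hx i).1.le
  · exact (hx i).2.le

lemma volume_Icc01 : volume (Set.Icc (0 : Fin 3 → ℝ) 1) = 1 := by
  rw [← Set.pi_univ_Icc, volume_pi_pi]; simp

lemma Qcell_ae_Icc : Qcell =ᵐ[volume] Set.Icc (0 : Fin 3 → ℝ) 1 := by
  rw [MeasureTheory.ae_eq_set]
  constructor
  · rw [Set.diff_eq_empty.2 Qcell_subset_Icc]; simp
  · rw [measure_diff Qcell_subset_Icc measurableSet_Qcell.nullMeasurableSet
      (by rw [volume_Qcell]; exact ENNReal.one_ne_top)]
    rw [volume_Icc01, volume_Qcell, tsub_self]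

lemma continuous_pd {f : (Fin 3 → ℝ) → ℝ} (hf : ContDiff ℝ 1 f) (i : Fin 3) :
    Continuous (pd f i) := by
  have h := (hf.continuous_fderiv one_ne_zero)
  exact (ContinuousLinearMap.apply ℝ ℝ (Pi.single i 1)).continuous.comp h

lemma insertNth_add_single (m : Fin 3) (y : Fin 2 → ℝ) :
    Fin.insertNth m (1:ℝ) y = (Fin.insertNth m (0:ℝ) y + Pi.single m 1 : Fin 3 → ℝ) := by
  funext j
  refine Fin.succAboveCases m ?_ ?_ j
  · simp
  · intro k
    simp [Fin.succAbove_ne m k, Pi.single_eq_of_ne (Fin.succAbove_ne m k)]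

/-- Key lemma: the integral over the unit cell of a partial derivative of a periodic `C¹`
function vanishes. -/
lemma integral_pd_eq_zero {f : (Fin 3 → ℝ) → ℝ} (hf : ContDiff ℝ 1 f) (hp : Per f)
    (m : Fin 3) : ∫ β in Qcell, pd f m β = 0 := by
  rw [setIntegral_congr_set Qcell_ae_Icc]
  have hdiff : Differentiable ℝ f := hf.differentiable one_ne_zero
  have key := MeasureTheory.integral_divergence_of_hasFDerivAt_off_countable'
      (n := 2) (0 : Fin 3 → ℝ) (1 : Fin 3 → ℝ) (zero_le_one)
      (fun i x => if i = m then f x else 0)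
      (fun i x => if i = m then fderiv ℝ f x else 0)
      ∅ Set.countable_empty
      (fun i => by
        by_cases h : i = m <;> simp [h]
        · exact hf.continuous.continuousOn
        · exact continuousOn_const)
      (fun x _ i => by
        by_cases h : i = m <;> simp [h]
        · exact (hdiff x).hasFDerivAt
        · exact hasFDerivAt_const 0 x)
      (by
        have : (fun x : Fin 3 → ℝ => ∑ i, (if i = m then fderiv ℝ f x else 0) (Pi.single i (1:ℝ)))
            = pd f m := by
          funext x
          rw [Finset.sum_eq_single m (fun b _ hb => by simp [hb]) (by simp)]
          simp [pd]
        rw [this]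
        exact (continuous_pd hf m).continuousOn.integrableOn_compact isCompact_Icc)
  have hL : (fun x : Fin 3 → ℝ => ∑ i, (if i = m then fderiv ℝ f x else 0) (Pi.single i (1:ℝ)))
      = pd f m := by
    funext x
    rw [Finset.sum_eq_single m (fun b _ hb => by simp [hb]) (by simp)]
    simp [pd]
  rw [hL] at key
  rw [key]
  apply Finset.sum_eq_zero
  intro i _
  by_cases h : i = m
  · subst h
    have : ∀ x : Fin 2 → ℝ, f (Fin.insertNth i ((1:Fin 3 → ℝ) i) x) =
        f (Fin.insertNth i ((0:Fin 3 → ℝ) i) x) := by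
      intro x
      have := hp (Fin.insertNth i (0:ℝ) x) i
      simpa [insertNth_add_single i x] using this
    rw [sub_eq_zero]
    refine setIntegral_congr_fun (by measurability) (fun x _ => ?_)
    simpa using this x
  · simp [h]

/-! ### Sum manipulation helpers -/

lemma sum_swap4 (F : Fin 3 → Fin 3 → Fin 3 → Fin 3 → ℝ) :
    (∑ i, ∑ j, ∑ k, ∑ l, F i j k l) = ∑ k, ∑ l, ∑ i, ∑ j, F i j k l := by
  simp only [Fin.sum_univ_three]; ring

lemma sum_swap12 (F : Fin 3 → Fin 3 → Fin 3 → Fin 3 → ℝ) :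
    (∑ i, ∑ j, ∑ k, ∑ l, F i j k l) = ∑ i, ∑ j, ∑ k, ∑ l, F j i k l := by
  simp only [Fin.sum_univ_three]; ring

lemma sum_swap34 (F : Fin 3 → Fin 3 → Fin 3 → Fin 3 → ℝ) :
    (∑ i, ∑ j, ∑ k, ∑ l, F i j k l) = ∑ i, ∑ j, ∑ k, ∑ l, F i j l k := by
  simp only [Fin.sum_univ_three]; ring

lemma sum4_congr {F G : Fin 3 → Fin 3 → Fin 3 → Fin 3 → ℝ}
    (h : ∀ i j k l, F i j k l = G i j k l) :
    (∑ i, ∑ j, ∑ k, ∑ l, F i j k l) = ∑ i, ∑ j, ∑ k, ∑ l, G i j k l := by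
  simp only [h]

/-! ### Integrability helpers -/

lemma bdd_on_Qcell {g : (Fin 3 → ℝ) → ℝ} (hg : Continuous g) :
    ∃ M, ∀ x ∈ Qcell, |g x| ≤ M := by
  obtain ⟨M, hM⟩ := (isCompact_Icc (a := (0:Fin 3 → ℝ)) (b := 1)).exists_bound_of_continuousOn
    hg.continuousOn
  exact ⟨M, fun x hx => by simpa [Real.norm_eq_abs] using hM x (Qcell_subset_Icc hx)⟩

lemma integrableOn_Qcell_bdd {g : (Fin 3 → ℝ) → ℝ} (hm : Measurable g) (M : ℝ)
    (hb : ∀ x ∈ Qcell, |g x| ≤ M) : IntegrableOn g Qcell := by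
  refine Measure.integrableOn_of_bounded (M := M) ?_ hm.aestronglyMeasurable ?_
  · rw [volume_Qcell]; exact ENNReal.one_ne_top
  · rw [ae_restrict_iff' measurableSet_Qcell]
    exact Filter.Eventually.of_forall fun x hx => by
      simpa [Real.norm_eq_abs] using hb x hx

lemma integrableOn_Qcell_continuous {g : (Fin 3 → ℝ) → ℝ} (hg : Continuous g) :
    IntegrableOn g Qcell :=
  (hg.continuousOn.integrableOn_compact isCompact_Icc).mono_set Qcell_subset_Icc

lemma integrableOn_mul_cont {c g : (Fin 3 → ℝ) → ℝ} (hc : Measurable c) {M : ℝ}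
    (hcb : ∀ β, |c β| ≤ M) (hg : Continuous g) :
    IntegrableOn (fun β => c β * g β) Qcell := by
  obtain ⟨B, hB⟩ := bdd_on_Qcell hg
  have hM0 : 0 ≤ M := le_trans (abs_nonneg _) (hcb 0)
  refine integrableOn_Qcell_bdd (hc.mul hg.measurable) (M * B) (fun x hx => ?_)
  rw [abs_mul]
  exact mul_le_mul (hcb x) (hB x hx) (abs_nonneg _) hM0

lemma integral_sum2 {F : Fin 3 → Fin 3 → (Fin 3 → ℝ) → ℝ}
    (hF : ∀ k l, IntegrableOn (F k l) Qcell) :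
    ∫ β in Qcell, (∑ k, ∑ l, F k l β) = ∑ k, ∑ l, ∫ β in Qcell, F k l β := by
  rw [integral_finset_sum _ (fun k _ => integrable_finset_sum _ (fun l _ => hF k l))]
  exact Finset.sum_congr rfl fun k _ => integral_finset_sum _ (fun l _ => hF k l)

lemma integral_sum4 {F : Fin 3 → Fin 3 → Fin 3 → Fin 3 → (Fin 3 → ℝ) → ℝ}
    (hF : ∀ i j k l, IntegrableOn (F i j k l) Qcell) :
    ∫ β in Qcell, (∑ i, ∑ j, ∑ k, ∑ l, F i j k l β)
      = ∑ i, ∑ j, ∑ k, ∑ l, ∫ β in Qcell, F i j k l β := by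
  rw [integral_sum2 (F := fun i j => fun β => ∑ k, ∑ l, F i j k l β)
    (fun i j => integrable_finset_sum _
      (fun k _ => integrable_finset_sum _ (fun l _ => hF i j k l)))]
  exact Finset.sum_congr rfl fun i _ => Finset.sum_congr rfl fun j _ =>
    integral_sum2 (fun k l => hF i j k l)

lemma pd_sum2 {g : Fin 3 → Fin 3 → (Fin 3 → ℝ) → ℝ} (hg : ∀ k l, Differentiable ℝ (g k l))
    (c : Fin 3 → Fin 3 → ℝ) (q : Fin 3) (β : Fin 3 → ℝ) :
    pd (fun b => ∑ k, ∑ l, c k l * g k l b) q β = ∑ k, ∑ l, c k l * pd (g k l) q β := by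
  unfold pd
  have h1 : ∀ (k : Fin 3), DifferentiableAt ℝ (fun b => ∑ l, c k l * g k l b) β :=
    fun k => DifferentiableAt.fun_sum fun l _ => (differentiableAt_const _).mul ((hg k l) β)
  rw [fderiv_fun_sum (fun k _ => h1 k), ContinuousLinearMap.sum_apply]
  refine Finset.sum_congr rfl fun k _ => ?_
  rw [fderiv_fun_sum (A := fun l b => c k l * g k l b)
    (fun l _ => (differentiableAt_const _).mul ((hg k l) β)),
    ContinuousLinearMap.sum_apply]
  refine Finset.sum_congr rfl fun l _ => ?_
  rw [fderiv_const_mul ((hg k l) β)]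
  simp

end Aux

section Fields
variable (N : Fin 3 → Fin 3 → (Fin 3 → ℝ) → Fin 3 → ℝ) (ξ : Matrix (Fin 3) (Fin 3) ℝ)

/-- The combined corrector field `w = ∑ ξ_{kl} N^{kl}`. -/
def wfld (β : Fin 3 → ℝ) (p : Fin 3) : ℝ := ∑ k, ∑ l, ξ k l * N k l β p

/-- Gradient entries of the cell functions. -/
def Dd (k l p q : Fin 3) (β : Fin 3 → ℝ) : ℝ := pd (fun b => N k l b p) q β

/-- Gradient entries of the combined corrector field. -/
def Gd (p q : Fin 3) (β : Fin 3 → ℝ) : ℝ := pd (fun b => wfld N ξ b p) q β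

variable {N}

lemma Dd_cont (hN : ∀ k l, Admissible (N k l)) (k l p q : Fin 3) :
    Continuous (Dd N k l p q) := continuous_pd ((hN k l).1 p) q

lemma wfld_contDiff (hN : ∀ k l, Admissible (N k l)) (p : Fin 3) :
    ContDiff ℝ 1 (fun β => wfld N ξ β p) :=
  ContDiff.sum fun k _ => ContDiff.sum fun l _ => contDiff_const.mul ((hN k l).1 p)

lemma Gd_cont (hN : ∀ k l, Admissible (N k l)) (p q : Fin 3) :
    Continuous (Gd N ξ p q) := continuous_pd (wfld_contDiff ξ hN p) q

lemma Gd_eq (hN : ∀ k l, Admissible (N k l)) (p q : Fin 3) (β : Fin 3 → ℝ) :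
    Gd N ξ p q β = ∑ k, ∑ l, ξ k l * Dd N k l p q β :=
  pd_sum2 (fun k l => ((hN k l).1 p).differentiable one_ne_zero) (fun k l => ξ k l) q β

lemma wfld_adm (hN : ∀ k l, Admissible (N k l)) : Admissible (wfld N ξ) := by
  refine ⟨wfld_contDiff ξ hN, ?_, ?_⟩
  · intro p x i
    exact Finset.sum_congr rfl fun k _ => Finset.sum_congr rfl fun l _ => by
      rw [show N k l (x + Pi.single i 1) p = N k l x p from (hN k l).2.1 p x i]
  · intro p
    have : (∫ β in Qcell, wfld N ξ β p)
        = ∑ k, ∑ l, ∫ β in Qcell, ξ k l * N k l β p :=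
      integral_sum2 (fun k l => (integrableOn_Qcell_continuous
        (((hN k l).1 p).continuous)).const_mul (ξ k l))
    rw [this]
    refine Finset.sum_eq_zero fun k _ => Finset.sum_eq_zero fun l _ => ?_
    rw [MeasureTheory.integral_const_mul, (hN k l).2.2 p, mul_zero]

lemma Gd_int0 (hN : ∀ k l, Admissible (N k l)) (p q : Fin 3) :
    ∫ β in Qcell, Gd N ξ p q β = 0 :=
  integral_pd_eq_zero (wfld_contDiff ξ hN p) ((wfld_adm ξ hN).2.1 p) q

end Fields

section Quad
variable (C : (Fin 3 → ℝ) → Fin 3 → Fin 3 → Fin 3 → Fin 3 → ℝ)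
  (N : Fin 3 → Fin 3 → (Fin 3 → ℝ) → Fin 3 → ℝ) (ξ : Matrix (Fin 3) (Fin 3) ℝ)

def Phi (β : Fin 3 → ℝ) : ℝ := ∑ i, ∑ j, ∑ k, ∑ l, C β i j k l * (ξ i j * ξ k l)

def Psi (β : Fin 3 → ℝ) : ℝ := ∑ i, ∑ j, ∑ k, ∑ l, C β i j k l * (Gd N ξ i j β * ξ k l)

def Theta (β : Fin 3 → ℝ) : ℝ :=
  ∑ i, ∑ j, ∑ k, ∑ l, C β i j k l * (Gd N ξ i j β * Gd N ξ k l β)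

def Lam (β : Fin 3 → ℝ) : ℝ :=
  ∑ i, ∑ j, ∑ k, ∑ l, C β i j k l * ((ξ i j + Gd N ξ i j β) * (ξ k l + Gd N ξ k l β))

variable {C N ξ}
variable (hCsym : ∀ β i j k l, C β i j k l = C β j i k l ∧ C β i j k l = C β i j l k ∧
      C β i j k l = C β k l i j)

include hCsym

set_option maxHeartbeats 2000000 in
/-- The homogenized quadratic form integrand equals `Φ + Ψ` pointwise. -/
lemma A1 (hN : ∀ k l, Admissible (N k l)) (β : Fin 3 → ℝ) :
    (∑ i, ∑ j, ∑ k, ∑ l,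
      (C β i j k l + ∑ m, ∑ n, C β i j m n * Dd N k l n m β) * ξ i j * ξ k l)
      = Phi C ξ β + Psi C N ξ β := by
  have hsplit : (∑ i, ∑ j, ∑ k, ∑ l,
      (C β i j k l + ∑ m, ∑ n, C β i j m n * Dd N k l n m β) * ξ i j * ξ k l)
      = Phi C ξ β + ∑ i, ∑ j, ∑ k, ∑ l,
        (∑ m, ∑ n, C β i j m n * Dd N k l n m β) * ξ i j * ξ k l := by
    simp only [Phi, Fin.sum_univ_three]; ring
  rw [hsplit]
  congr 1
  -- reorganize the second sum
  have h1 : (∑ i, ∑ j, ∑ k, ∑ l,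
        (∑ m, ∑ n, C β i j m n * Dd N k l n m β) * ξ i j * ξ k l)
      = ∑ i, ∑ j, ∑ m, ∑ n, C β i j m n * ((∑ k, ∑ l, ξ k l * Dd N k l n m β) * ξ i j) := by
    simp only [Fin.sum_univ_three]; ring
  rw [h1]
  have h2 : (∑ i, ∑ j, ∑ m, ∑ n, C β i j m n * ((∑ k, ∑ l, ξ k l * Dd N k l n m β) * ξ i j))
      = ∑ i, ∑ j, ∑ m, ∑ n, C β i j m n * (Gd N ξ n m β * ξ i j) :=
    Finset.sum_congr rfl fun i _ => Finset.sum_congr rfl fun j _ =>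
      Finset.sum_congr rfl fun m _ => Finset.sum_congr rfl fun n _ => by
        rw [← Gd_eq ξ hN n m β]
  rw [h2]
  -- now use the symmetries of C
  calc (∑ i, ∑ j, ∑ k, ∑ l, C β i j k l * (Gd N ξ l k β * ξ i j))
      = ∑ i, ∑ j, ∑ k, ∑ l, C β i j l k * (Gd N ξ l k β * ξ i j) :=
        sum4_congr fun i j k l => by rw [← (hCsym β i j k l).2.1]
    _ = ∑ i, ∑ j, ∑ k, ∑ l, C β i j k l * (Gd N ξ k l β * ξ i j) :=
        (sum_swap34 fun i j k l => C β i j k l * (Gd N ξ k l β * ξ i j)).symm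
    _ = ∑ i, ∑ j, ∑ k, ∑ l, C β k l i j * (Gd N ξ k l β * ξ i j) :=
        sum4_congr fun i j k l => by rw [← (hCsym β i j k l).2.2]
    _ = ∑ i, ∑ j, ∑ k, ∑ l, C β i j k l * (Gd N ξ i j β * ξ k l) :=
        sum_swap4 fun k l i j => C β i j k l * (Gd N ξ i j β * ξ k l)
    _ = Psi C N ξ β := rfl

set_option maxHeartbeats 2000000 in
omit hCsym in
/-- The tested cell-problem integrand, summed against `ξ`, equals `Θ` pointwise. -/
lemma A2 (hN : ∀ k l, Admissible (N k l)) (β : Fin 3 → ℝ) :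
    (∑ k, ∑ l, ξ k l * (∑ i, ∑ j, ∑ p, ∑ q,
        C β i j p q * Dd N k l p q β * Gd N ξ i j β))
      = Theta C N ξ β := by
  have h1 : (∑ k, ∑ l, ξ k l * (∑ i, ∑ j, ∑ p, ∑ q,
        C β i j p q * Dd N k l p q β * Gd N ξ i j β))
      = ∑ i, ∑ j, ∑ p, ∑ q, C β i j p q *
          ((∑ k, ∑ l, ξ k l * Dd N k l p q β) * Gd N ξ i j β) := by
    simp only [Fin.sum_univ_three]; ring
  rw [h1]
  refine Finset.sum_congr rfl fun i _ => Finset.sum_congr rfl fun j _ =>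
    Finset.sum_congr rfl fun p _ => Finset.sum_congr rfl fun q _ => ?_
  rw [← Gd_eq ξ hN p q β]
  ring

omit hCsym in
/-- The right-hand side of the cell problem, summed against `ξ`, equals `Ψ` pointwise. -/
lemma A3 (β : Fin 3 → ℝ) :
    (∑ k, ∑ l, ξ k l * (∑ i, ∑ j, C β i j k l * Gd N ξ i j β)) = Psi C N ξ β := by
  simp only [Psi, Fin.sum_univ_three]; ring

set_option maxHeartbeats 2000000 in
/-- Pointwise expansion of `Λ`. -/
lemma A4 (β : Fin 3 → ℝ) :
    Lam C N ξ β = Phi C ξ β + Psi C N ξ β + Psi C N ξ β + Theta C N ξ β := by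
  have hexp : Lam C N ξ β = Phi C ξ β
      + (∑ i, ∑ j, ∑ k, ∑ l, C β i j k l * (ξ i j * Gd N ξ k l β))
      + Psi C N ξ β + Theta C N ξ β := by
    simp only [Lam, Phi, Psi, Theta, Fin.sum_univ_three]; ring
  have hXPsi : (∑ i, ∑ j, ∑ k, ∑ l, C β i j k l * (ξ i j * Gd N ξ k l β))
      = Psi C N ξ β := by
    calc (∑ i, ∑ j, ∑ k, ∑ l, C β i j k l * (ξ i j * Gd N ξ k l β))
        = ∑ i, ∑ j, ∑ k, ∑ l, C β k l i j * (ξ i j * Gd N ξ k l β) :=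
          sum4_congr fun i j k l => by rw [← (hCsym β i j k l).2.2]
      _ = ∑ i, ∑ j, ∑ k, ∑ l, C β i j k l * (ξ k l * Gd N ξ i j β) :=
          sum_swap4 fun k l i j => C β i j k l * (ξ k l * Gd N ξ i j β)
      _ = Psi C N ξ β := by simp only [Psi, Fin.sum_univ_three]; ring
  rw [hexp, hXPsi]

set_option maxHeartbeats 2000000 in
/-- Symmetrization identity for the quadratic form. -/
lemma symQuad (β : Fin 3 → ℝ) (η : Fin 3 → Fin 3 → ℝ) :
    (∑ i, ∑ j, ∑ k, ∑ l,
        C β i j k l * ((η i j + η j i) / 2) * ((η k l + η l k) / 2))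
      = ∑ i, ∑ j, ∑ k, ∑ l, C β i j k l * (η i j * η k l) := by
  have e2 : (∑ i, ∑ j, ∑ k, ∑ l, C β i j k l * (η i j * η l k))
      = ∑ i, ∑ j, ∑ k, ∑ l, C β i j k l * (η i j * η k l) := by
    calc (∑ i, ∑ j, ∑ k, ∑ l, C β i j k l * (η i j * η l k))
        = ∑ i, ∑ j, ∑ k, ∑ l, C β i j l k * (η i j * η l k) :=
          sum4_congr fun i j k l => by rw [← (hCsym β i j k l).2.1]
      _ = ∑ i, ∑ j, ∑ k, ∑ l, C β i j k l * (η i j * η k l) :=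
          sum_swap34 fun i j k l => C β i j l k * (η i j * η l k)
  have e3 : (∑ i, ∑ j, ∑ k, ∑ l, C β i j k l * (η j i * η k l))
      = ∑ i, ∑ j, ∑ k, ∑ l, C β i j k l * (η i j * η k l) := by
    calc (∑ i, ∑ j, ∑ k, ∑ l, C β i j k l * (η j i * η k l))
        = ∑ i, ∑ j, ∑ k, ∑ l, C β j i k l * (η j i * η k l) :=
          sum4_congr fun i j k l => by rw [← (hCsym β i j k l).1]
      _ = ∑ i, ∑ j, ∑ k, ∑ l, C β i j k l * (η i j * η k l) :=
          sum_swap12 fun i j k l => C β j i k l * (η j i * η k l)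
  have e4 : (∑ i, ∑ j, ∑ k, ∑ l, C β i j k l * (η j i * η l k))
      = ∑ i, ∑ j, ∑ k, ∑ l, C β i j k l * (η i j * η l k) := by
    calc (∑ i, ∑ j, ∑ k, ∑ l, C β i j k l * (η j i * η l k))
        = ∑ i, ∑ j, ∑ k, ∑ l, C β j i k l * (η j i * η l k) :=
          sum4_congr fun i j k l => by rw [← (hCsym β i j k l).1]
      _ = ∑ i, ∑ j, ∑ k, ∑ l, C β i j k l * (η i j * η l k) :=
          sum_swap12 fun i j k l => C β j i k l * (η j i * η l k)
  have expand : (∑ i, ∑ j, ∑ k, ∑ l,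
        C β i j k l * ((η i j + η j i) / 2) * ((η k l + η l k) / 2))
      = ((∑ i, ∑ j, ∑ k, ∑ l, C β i j k l * (η i j * η k l))
        + (∑ i, ∑ j, ∑ k, ∑ l, C β i j k l * (η i j * η l k))
        + (∑ i, ∑ j, ∑ k, ∑ l, C β i j k l * (η j i * η k l))
        + (∑ i, ∑ j, ∑ k, ∑ l, C β i j k l * (η j i * η l k))) / 4 := by
    simp only [Fin.sum_univ_three]; ring
  rw [expand, e4, e2, e3]
  ring

/-- Pointwise ellipticity lower bound for `Λ`. -/
lemma A5 (hN : ∀ k l, Admissible (N k l)) {lam : ℝ}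
    (hell : ∀ (β : Fin 3 → ℝ) (η : Matrix (Fin 3) (Fin 3) ℝ), η.IsSymm →
      lam * (∑ i, ∑ j, η i j ^ 2) ≤ ∑ i, ∑ j, ∑ k, ∑ l, C β i j k l * η i j * η k l)
    (hξ : ξ.IsSymm) (β : Fin 3 → ℝ) :
    lam * (∑ i, ∑ j, (ξ i j + (Gd N ξ i j β + Gd N ξ j i β) / 2) ^ 2) ≤ Lam C N ξ β := by
  have hs_entry : ∀ i j, (Matrix.of fun i j => ξ i j + (Gd N ξ i j β + Gd N ξ j i β) / 2) i j
      = ξ i j + (Gd N ξ i j β + Gd N ξ j i β) / 2 := fun i j => rfl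
  set s : Matrix (Fin 3) (Fin 3) ℝ :=
    Matrix.of fun i j => ξ i j + (Gd N ξ i j β + Gd N ξ j i β) / 2 with hs
  have hssymm : s.IsSymm := Matrix.IsSymm.ext fun i j => by
    simp only [hs, Matrix.of_apply]
    rw [hξ.apply i j]
    ring
  have h := hell β s hssymm
  have h1 : ∀ i j, s i j = ((ξ i j + Gd N ξ i j β) + (ξ j i + Gd N ξ j i β)) / 2 := by
    intro i j
    simp only [hs, Matrix.of_apply]
    rw [hξ.apply i j]
    ring
  have hRHS : (∑ i, ∑ j, ∑ k, ∑ l, C β i j k l * s i j * s k l) = Lam C N ξ β := by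
    calc (∑ i, ∑ j, ∑ k, ∑ l, C β i j k l * s i j * s k l)
        = ∑ i, ∑ j, ∑ k, ∑ l, C β i j k l
            * (((ξ i j + Gd N ξ i j β) + (ξ j i + Gd N ξ j i β)) / 2)
            * (((ξ k l + Gd N ξ k l β) + (ξ l k + Gd N ξ l k β)) / 2) :=
          sum4_congr fun i j k l => by rw [h1 i j, h1 k l]
      _ = ∑ i, ∑ j, ∑ k, ∑ l, C β i j k l
            * ((ξ i j + Gd N ξ i j β) * (ξ k l + Gd N ξ k l β)) :=
          symQuad hCsym β (fun i j => ξ i j + Gd N ξ i j β)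
      _ = Lam C N ξ β := rfl
  rw [hRHS] at h
  have hLHS : (∑ i, ∑ j, s i j ^ 2)
      = ∑ i, ∑ j, (ξ i j + (Gd N ξ i j β + Gd N ξ j i β) / 2) ^ 2 :=
    Finset.sum_congr rfl fun i _ => Finset.sum_congr rfl fun j _ => by
      rw [hs_entry i j]
  rw [hLHS] at h
  exact h

end Quad



set_option maxHeartbeats 4000000 in
/-- the homogenized elasticity tensor obtained from a uniformly
elliptic periodic tensor via the cell functions is itself uniformly elliptic on
symmetric matrices. -/
theorem stmt3
    (C : (Fin 3 → ℝ) → Fin 3 → Fin 3 → Fin 3 → Fin 3 → ℝ)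
    (hCmeas : ∀ i j k l, Measurable (fun β => C β i j k l))
    (hCbound : ∃ M : ℝ, ∀ β i j k l, |C β i j k l| ≤ M)
    (hCsym : ∀ β i j k l, C β i j k l = C β j i k l ∧ C β i j k l = C β i j l k ∧
      C β i j k l = C β k l i j)
    (hell : ∃ lam : ℝ, 0 < lam ∧ ∀ (β : Fin 3 → ℝ) (ξ : Matrix (Fin 3) (Fin 3) ℝ),
      ξ.IsSymm → lam * (∑ i, ∑ j, ξ i j ^ 2) ≤ ∑ i, ∑ j, ∑ k, ∑ l, C β i j k l * ξ i j * ξ k l)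
    (N : Fin 3 → Fin 3 → (Fin 3 → ℝ) → Fin 3 → ℝ)
    (hNadm : ∀ k l, Admissible (N k l))
    (hNsol : ∀ (k l : Fin 3), ∀ v : (Fin 3 → ℝ) → Fin 3 → ℝ, Admissible v →
      (∫ β in Qcell, ∑ i, ∑ j, ∑ p, ∑ q,
          C β i j p q * pd (fun b => N k l b p) q β * pd (fun b => v b i) j β)
        = -∫ β in Qcell, ∑ i, ∑ j, C β i j k l * pd (fun b => v b i) j β)
    (Chat : Fin 3 → Fin 3 → Fin 3 → Fin 3 → ℝ)
    (hChat : ∀ i j k l, Chat i j k l = (volume Qcell).toReal⁻¹ *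
      ∫ β in Qcell, (C β i j k l + ∑ m, ∑ n, C β i j m n * pd (fun b => N k l b n) m β)) :
    ∃ lam' : ℝ, 0 < lam' ∧ ∀ ξ : Matrix (Fin 3) (Fin 3) ℝ, ξ.IsSymm →
      lam' * (∑ i, ∑ j, ξ i j ^ 2) ≤ ∑ i, ∑ j, ∑ k, ∑ l, Chat i j k l * ξ i j * ξ k l := by
  classical
  obtain ⟨lam, hlam, hell⟩ := hell
  obtain ⟨M, hM⟩ := hCbound
  refine ⟨lam, hlam, fun ξ hξ => ?_⟩
  -- continuity facts
  have hDc : ∀ k l p q, Continuous (Dd N k l p q) := fun k l => Dd_cont hNadm k l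
  have hGc : ∀ p q, Continuous (Gd N ξ p q) := Gd_cont ξ hNadm
  -- integrability facts
  have hintC : ∀ i j k l, IntegrableOn (fun β => C β i j k l) Qcell := fun i j k l =>
    integrableOn_Qcell_bdd (hCmeas i j k l) M (fun x _ => hM x i j k l)
  have hintCg : ∀ (i j k l : Fin 3) (g : (Fin 3 → ℝ) → ℝ), Continuous g →
      IntegrableOn (fun β => C β i j k l * g β) Qcell := fun i j k l g hg =>
    integrableOn_mul_cont (hCmeas i j k l) (fun β => hM β i j k l) hg
  have hintPhi : IntegrableOn (Phi C ξ) Qcell := by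
    unfold Phi
    exact integrable_finset_sum _ fun i _ => integrable_finset_sum _ fun j _ =>
      integrable_finset_sum _ fun k _ => integrable_finset_sum _ fun l _ =>
        hintCg i j k l _ continuous_const
  have hintPsi : IntegrableOn (Psi C N ξ) Qcell := by
    unfold Psi
    exact integrable_finset_sum _ fun i _ => integrable_finset_sum _ fun j _ =>
      integrable_finset_sum _ fun k _ => integrable_finset_sum _ fun l _ =>
        hintCg i j k l _ ((hGc i j).mul continuous_const)
  have hintTheta : IntegrableOn (Theta C N ξ) Qcell := by
    unfold Theta
    exact integrable_finset_sum _ fun i _ => integrable_finset_sum _ fun j _ =>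
      integrable_finset_sum _ fun k _ => integrable_finset_sum _ fun l _ =>
        hintCg i j k l _ ((hGc i j).mul (hGc k l))
  have hintLam : IntegrableOn (Lam C N ξ) Qcell := by
    unfold Lam
    exact integrable_finset_sum _ fun i _ => integrable_finset_sum _ fun j _ =>
      integrable_finset_sum _ fun k _ => integrable_finset_sum _ fun l _ =>
        hintCg i j k l _ ((continuous_const.add (hGc i j)).mul (continuous_const.add (hGc k l)))
  -- Step 1: rewrite the homogenized tensor using `volume Qcell = 1`
  have hvol : (volume Qcell).toReal⁻¹ = 1 := by rw [volume_Qcell]; simp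
  have hChat' : ∀ i j k l, Chat i j k l
      = ∫ β in Qcell, (C β i j k l + ∑ m, ∑ n, C β i j m n * Dd N k l n m β) := by
    intro i j k l
    rw [hChat i j k l, hvol, one_mul]
    simp only [Dd]
  have hAh : ∀ i j k l : Fin 3, IntegrableOn
      (fun β => (C β i j k l + ∑ m, ∑ n, C β i j m n * Dd N k l n m β) * ξ i j * ξ k l)
      Qcell := fun i j k l =>
    (((hintC i j k l).add (integrable_finset_sum _ fun m _ =>
      integrable_finset_sum _ fun n _ => hintCg i j m n _ (hDc k l n m))).mul_const
        _).mul_const _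
  -- Step 2: the homogenized quadratic form as an integral
  have hS : (∑ i, ∑ j, ∑ k, ∑ l, Chat i j k l * ξ i j * ξ k l)
      = ∫ β in Qcell, (Phi C ξ β + Psi C N ξ β) := by
    calc (∑ i, ∑ j, ∑ k, ∑ l, Chat i j k l * ξ i j * ξ k l)
        = ∑ i, ∑ j, ∑ k, ∑ l, ∫ β in Qcell,
            (C β i j k l + ∑ m, ∑ n, C β i j m n * Dd N k l n m β) * ξ i j * ξ k l :=
          sum4_congr fun i j k l => by
            rw [hChat' i j k l, ← MeasureTheory.integral_mul_const,
              ← MeasureTheory.integral_mul_const]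
      _ = ∫ β in Qcell, ∑ i, ∑ j, ∑ k, ∑ l,
            (C β i j k l + ∑ m, ∑ n, C β i j m n * Dd N k l n m β) * ξ i j * ξ k l :=
          (integral_sum4 hAh).symm
      _ = ∫ β in Qcell, (Phi C ξ β + Psi C N ξ β) :=
          integral_congr_ae (ae_of_all _ fun β => A1 hCsym hNadm β)
  -- Step 3: the energy identity coming from the cell problem
  have hintCDG : ∀ i j p q k l : Fin 3, IntegrableOn
      (fun β => C β i j p q * Dd N k l p q β * Gd N ξ i j β) Qcell := fun i j p q k l => by
    have := hintCg i j p q _ ((hDc k l p q).mul (hGc i j))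
    simpa [mul_assoc] using this
  have hintInner : ∀ k l : Fin 3, IntegrableOn (fun β => ∑ i, ∑ j, ∑ p, ∑ q,
      C β i j p q * Dd N k l p q β * Gd N ξ i j β) Qcell := fun k l =>
    integrable_finset_sum _ fun i _ => integrable_finset_sum _ fun j _ =>
      integrable_finset_sum _ fun p _ => integrable_finset_sum _ fun q _ =>
        hintCDG i j p q k l
  have hintInner2 : ∀ k l : Fin 3, IntegrableOn (fun β => ∑ i, ∑ j,
      C β i j k l * Gd N ξ i j β) Qcell := fun k l =>
    integrable_finset_sum _ fun i _ => integrable_finset_sum _ fun j _ =>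
      hintCg i j k l _ (hGc i j)
  have hsol : ∀ k l : Fin 3, (∫ β in Qcell, ∑ i, ∑ j, ∑ p, ∑ q,
        C β i j p q * Dd N k l p q β * Gd N ξ i j β)
      = -∫ β in Qcell, ∑ i, ∑ j, C β i j k l * Gd N ξ i j β := by
    intro k l
    have h := hNsol k l (wfld N ξ) (wfld_adm ξ hNadm)
    unfold Dd Gd
    exact h
  have l1 : (∑ k, ∑ l, ξ k l * ∫ β in Qcell, (∑ i, ∑ j, ∑ p, ∑ q,
        C β i j p q * Dd N k l p q β * Gd N ξ i j β))
      = ∫ β in Qcell, Theta C N ξ β := by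
    calc (∑ k, ∑ l, ξ k l * ∫ β in Qcell, (∑ i, ∑ j, ∑ p, ∑ q,
          C β i j p q * Dd N k l p q β * Gd N ξ i j β))
        = ∑ k, ∑ l, ∫ β in Qcell, ξ k l * (∑ i, ∑ j, ∑ p, ∑ q,
            C β i j p q * Dd N k l p q β * Gd N ξ i j β) :=
          Finset.sum_congr rfl fun k _ => Finset.sum_congr rfl fun l _ =>
            (MeasureTheory.integral_const_mul _ _).symm
      _ = ∫ β in Qcell, ∑ k, ∑ l, ξ k l * (∑ i, ∑ j, ∑ p, ∑ q,
            C β i j p q * Dd N k l p q β * Gd N ξ i j β) :=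
          (integral_sum2 (fun k l => (hintInner k l).const_mul _)).symm
      _ = ∫ β in Qcell, Theta C N ξ β :=
          integral_congr_ae (ae_of_all _ fun β => A2 hNadm β)
  have l2 : (∑ k, ∑ l, ξ k l * -∫ β in Qcell, (∑ i, ∑ j, C β i j k l * Gd N ξ i j β))
      = -∫ β in Qcell, Psi C N ξ β := by
    have inner : (∑ k, ∑ l, ξ k l * ∫ β in Qcell, (∑ i, ∑ j, C β i j k l * Gd N ξ i j β))
        = ∫ β in Qcell, Psi C N ξ β := by
      calc (∑ k, ∑ l, ξ k l * ∫ β in Qcell, (∑ i, ∑ j, C β i j k l * Gd N ξ i j β))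
          = ∑ k, ∑ l, ∫ β in Qcell, ξ k l * (∑ i, ∑ j, C β i j k l * Gd N ξ i j β) :=
            Finset.sum_congr rfl fun k _ => Finset.sum_congr rfl fun l _ =>
              (MeasureTheory.integral_const_mul _ _).symm
        _ = ∫ β in Qcell, ∑ k, ∑ l, ξ k l * (∑ i, ∑ j, C β i j k l * Gd N ξ i j β) :=
            (integral_sum2 (fun k l => (hintInner2 k l).const_mul _)).symm
        _ = ∫ β in Qcell, Psi C N ξ β :=
            integral_congr_ae (ae_of_all _ fun β => A3 β)
    calc (∑ k, ∑ l, ξ k l * -∫ β in Qcell, (∑ i, ∑ j, C β i j k l * Gd N ξ i j β))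
        = -(∑ k, ∑ l, ξ k l * ∫ β in Qcell, (∑ i, ∑ j, C β i j k l * Gd N ξ i j β)) := by
          simp [mul_neg, Finset.sum_neg_distrib]
      _ = -∫ β in Qcell, Psi C N ξ β := by rw [inner]
  have hTheta_eq : (∫ β in Qcell, Theta C N ξ β) = -∫ β in Qcell, Psi C N ξ β := by
    rw [← l1, ← l2]
    exact Finset.sum_congr rfl fun k _ => Finset.sum_congr rfl fun l _ => by rw [hsol k l]
  -- Step 4: ∫ Λ equals the homogenized quadratic form
  have hLamInt : (∫ β in Qcell, Lam C N ξ β) = ∫ β in Qcell, (Phi C ξ β + Psi C N ξ β) := by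
    calc (∫ β in Qcell, Lam C N ξ β)
        = ∫ β in Qcell, (Phi C ξ β + Psi C N ξ β + Psi C N ξ β + Theta C N ξ β) :=
          integral_congr_ae (ae_of_all _ fun β => A4 hCsym β)
      _ = (((∫ β in Qcell, Phi C ξ β) + ∫ β in Qcell, Psi C N ξ β)
            + ∫ β in Qcell, Psi C N ξ β) + ∫ β in Qcell, Theta C N ξ β := by
          have i1 : IntegrableOn (fun β => Phi C ξ β + Psi C N ξ β) Qcell :=
            hintPhi.add hintPsi
          have i2 : IntegrableOn (fun β => Phi C ξ β + Psi C N ξ β + Psi C N ξ β) Qcell :=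
            i1.add hintPsi
          rw [integral_add i2 hintTheta, integral_add i1 hintPsi,
            integral_add hintPhi hintPsi]
      _ = (∫ β in Qcell, Phi C ξ β) + ∫ β in Qcell, Psi C N ξ β := by
          rw [hTheta_eq]; ring
      _ = ∫ β in Qcell, (Phi C ξ β + Psi C N ξ β) := (integral_add hintPhi hintPsi).symm
  -- Step 5: lower bound by ellipticity
  have hmono : (∫ β in Qcell, lam * (∑ i, ∑ j,
        (ξ i j + (Gd N ξ i j β + Gd N ξ j i β) / 2) ^ 2))
      ≤ ∫ β in Qcell, Lam C N ξ β := by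
    refine setIntegral_mono_on ?_ hintLam measurableSet_Qcell (fun β _ => ?_)
    · exact integrableOn_Qcell_continuous (continuous_const.mul
        (continuous_finset_sum _ fun i _ => continuous_finset_sum _ fun j _ =>
          ((continuous_const.add (((hGc i j).add (hGc j i)).div_const 2)).pow 2)))
    · exact A5 hCsym hNadm hell hξ β
  have hsq : ∀ i j : Fin 3, (ξ i j) ^ 2
      ≤ ∫ β in Qcell, (ξ i j + (Gd N ξ i j β + Gd N ξ j i β) / 2) ^ 2 := by
    intro i j
    have htc : Continuous (fun β => (Gd N ξ i j β + Gd N ξ j i β) / 2) :=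
      ((hGc i j).add (hGc j i)).div_const 2
    have hint1 : IntegrableOn (fun β => (Gd N ξ i j β + Gd N ξ j i β) / 2) Qcell :=
      integrableOn_Qcell_continuous htc
    have hint2 : IntegrableOn (fun β => ((Gd N ξ i j β + Gd N ξ j i β) / 2) ^ 2) Qcell :=
      integrableOn_Qcell_continuous (htc.pow 2)
    have hintconst : IntegrableOn (fun _ : Fin 3 → ℝ => (ξ i j) ^ 2) Qcell :=
      integrableOn_Qcell_continuous continuous_const
    have ht0 : (∫ β in Qcell, (Gd N ξ i j β + Gd N ξ j i β) / 2) = 0 := by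
      rw [MeasureTheory.integral_div,
        integral_add (integrableOn_Qcell_continuous (hGc i j))
          (integrableOn_Qcell_continuous (hGc j i)),
        Gd_int0 ξ hNadm i j, Gd_int0 ξ hNadm j i]
      norm_num
    have key : (∫ β in Qcell, (ξ i j + (Gd N ξ i j β + Gd N ξ j i β) / 2) ^ 2)
        = (ξ i j) ^ 2 + ∫ β in Qcell, ((Gd N ξ i j β + Gd N ξ j i β) / 2) ^ 2 := by
      calc (∫ β in Qcell, (ξ i j + (Gd N ξ i j β + Gd N ξ j i β) / 2) ^ 2)
          = ∫ β in Qcell, ((ξ i j) ^ 2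
              + (2 * ξ i j) * ((Gd N ξ i j β + Gd N ξ j i β) / 2)
              + ((Gd N ξ i j β + Gd N ξ j i β) / 2) ^ 2) :=
            integral_congr_ae (ae_of_all _ fun β => by ring)
        _ = ((∫ _ in Qcell, (ξ i j) ^ 2)
              + ∫ β in Qcell, (2 * ξ i j) * ((Gd N ξ i j β + Gd N ξ j i β) / 2))
              + ∫ β in Qcell, ((Gd N ξ i j β + Gd N ξ j i β) / 2) ^ 2 := by
            have iB : IntegrableOn
                (fun β => (2 * ξ i j) * ((Gd N ξ i j β + Gd N ξ j i β) / 2)) Qcell :=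
              hint1.const_mul _
            have iA : IntegrableOn (fun β => (ξ i j) ^ 2
                + (2 * ξ i j) * ((Gd N ξ i j β + Gd N ξ j i β) / 2)) Qcell :=
              hintconst.add iB
            rw [integral_add iA hint2, integral_add hintconst iB]
        _ = (ξ i j) ^ 2 + ∫ β in Qcell, ((Gd N ξ i j β + Gd N ξ j i β) / 2) ^ 2 := by
            rw [MeasureTheory.integral_const_mul, ht0, setIntegral_const, measureReal_def, volume_Qcell]
            simp
    rw [key]
    exact le_add_of_nonneg_right (setIntegral_nonneg measurableSet_Qcell
      fun β _ => sq_nonneg _)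
  have hfinal : lam * (∑ i, ∑ j, (ξ i j) ^ 2)
      ≤ ∫ β in Qcell, lam * (∑ i, ∑ j,
          (ξ i j + (Gd N ξ i j β + Gd N ξ j i β) / 2) ^ 2) := by
    have hIeq : (∫ β in Qcell, lam * (∑ i, ∑ j,
          (ξ i j + (Gd N ξ i j β + Gd N ξ j i β) / 2) ^ 2))
        = lam * ∑ i, ∑ j, ∫ β in Qcell,
            (ξ i j + (Gd N ξ i j β + Gd N ξ j i β) / 2) ^ 2 := by
      rw [MeasureTheory.integral_const_mul]
      congr 1
      exact integral_sum2 fun i j => integrableOn_Qcell_continuous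
        ((continuous_const.add (((hGc i j).add (hGc j i)).div_const 2)).pow 2)
    rw [hIeq]
    exact mul_le_mul_of_nonneg_left
      (Finset.sum_le_sum fun i _ => Finset.sum_le_sum fun j _ => hsq i j) hlam.le
  linarith [hmono, hfinal, hLamInt, hS]
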